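/- Let μ > 0, T > 0, and ω(t) = √(1+2μt)·ω where ω = [−1,1] ∪ ⋃_{n≥1}((n²,n²+n) ∪ (−n²−n,−n²)) ⊂ ℝ. Then there exist r > 0 and δ > 0 such that for all x ∈ ℝ, ∫₀^T λ((x−r, x+r) ∩ ω(t)) dt ≥ δ, even though for each fixed t ∈ [0,T] the set ω(t) is not thick in ℝ. -/

import Mathlib

open MeasureTheory

/-- A measurable set `S ⊆ ℝ` is thick. -/
def IsThick1 (S : Set ℝ) : Prop :=
  ∃ δ₀ L : ℝ, 0 < δ₀ ∧ δ₀ ≤ 1 ∧ 0 < L ∧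
    ∀ x : ℝ, ENNReal.ofReal (δ₀ * L) ≤ volume (S ∩ Set.Icc x (x + L))

/-!
A point `y` lies in `ω(t) = √(1 + 2μt) • ω` iff `y / √(1 + 2μt) ∈ ω`. As `t` runs over `(0, T]`,
`y / √(1 + 2μt)` sweeps `[y / C, y)`, `C = √(1 + 2μT)`, crossing every block `(n², n² + n)` with
`y / C ≤ n²` and `n² + n ≤ y`. By AM-GM the time spent in block `n` is at least
`((y / n²)² - (y / (n + 1)²)²) / (4μ)`; these telescope to nearly `T / 2` once `|y|` is large.
Integrating over a unit interval of such `y` inside `(x - r, x + r)` and swapping the integrals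
(Fubini) gives the uniform lower bound. A fixed `ω(t)` misses the dilated gaps
`√(1 + 2μt) • [n² + n, (n + 1)²)`, whose lengths are unbounded.
-/

open Set Filter Topology
open scoped ENNReal

def squareBlocks : Set ℝ :=
  Icc (-1 : ℝ) 1 ∪ ⋃ n : ℕ, ⋃ (_ : 1 ≤ n),
    (Ioo ((n : ℝ) ^ 2) ((n : ℝ) ^ 2 + n) ∪ Ioo (-(n : ℝ) ^ 2 - n) (-(n : ℝ) ^ 2))

lemma measurableSet_squareBlocks : MeasurableSet squareBlocks :=
  measurableSet_Icc.union <| .iUnion fun _ => .iUnion fun _ =>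
    measurableSet_Ioo.union measurableSet_Ioo

lemma neg_mem_squareBlocks_iff {z : ℝ} : -z ∈ squareBlocks ↔ z ∈ squareBlocks := by
  have neg_mem : ∀ z, z ∈ squareBlocks → -z ∈ squareBlocks := by
    intro z hz
    simp only [squareBlocks, mem_union, mem_Icc, mem_iUnion, mem_Ioo] at hz ⊢
    rcases hz with h | ⟨n, hn, h | h⟩
    · exact Or.inl ⟨by linarith, by linarith⟩
    · exact Or.inr ⟨n, hn, Or.inr ⟨by linarith, by linarith⟩⟩
    · exact Or.inr ⟨n, hn, Or.inl ⟨by linarith, by linarith⟩⟩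
  exact ⟨fun h => by simpa using neg_mem _ h, neg_mem z⟩

lemma Ioo_subset_squareBlocks {n : ℕ} (hn : 1 ≤ n) :
    Ioo ((n : ℝ) ^ 2) ((n : ℝ) ^ 2 + n) ⊆ squareBlocks :=
  fun _ hz => Or.inr <| mem_iUnion₂.2 ⟨n, hn, Or.inl hz⟩

lemma disjoint_squareBlocks_Ico {n : ℕ} (hn : 1 ≤ n) :
    Disjoint squareBlocks (Ico ((n : ℝ) ^ 2 + n) (((n : ℝ) + 1) ^ 2)) := by
  have hn' : (1 : ℝ) ≤ n := by exact_mod_cast hn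
  rw [Set.disjoint_left]
  rintro z hz ⟨hlo, hhi⟩
  simp only [squareBlocks, mem_union, mem_Icc, mem_iUnion, mem_Ioo] at hz
  rcases hz with h | ⟨m, hm, h | h⟩
  · nlinarith
  · rcases le_or_gt m n with hmn | hmn
    · have : (m : ℝ) ≤ n := by exact_mod_cast hmn
      nlinarith
    · have : (n : ℝ) + 1 ≤ m := by exact_mod_cast hmn
      nlinarith
  · nlinarith

lemma not_isThick1_of_forall_exists_disjoint {S : Set ℝ}
    (h : ∀ L, ∃ x, Disjoint S (Icc x (x + L))) : ¬ IsThick1 S := by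
  rintro ⟨δ₀, L, hδ₀, -, hL, hS⟩
  obtain ⟨x, hx⟩ := h L
  have := hS x
  rw [hx.inter_eq, measure_empty, nonpos_iff_eq_zero, ENNReal.ofReal_eq_zero] at this
  exact (mul_pos hδ₀ hL).not_ge this

lemma not_isThick1_image_mul_squareBlocks {c : ℝ} (hc : 0 < c) :
    ¬ IsThick1 ((c * ·) '' squareBlocks) := by
  refine not_isThick1_of_forall_exists_disjoint fun L => ?_
  obtain ⟨m, hm⟩ := exists_nat_gt (L / c)
  have hL : L < c * ((m + 1 : ℕ) + 1) := by
    rw [div_lt_iff₀ hc] at hm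
    push_cast
    nlinarith
  refine ⟨c * (((m + 1 : ℕ) : ℝ) ^ 2 + (m + 1 : ℕ)), Set.disjoint_left.2 ?_⟩
  rintro _ ⟨z, hz, rfl⟩ ⟨hlo, hhi⟩
  refine (disjoint_squareBlocks_Ico (Nat.le_add_left 1 m)).ne_of_mem hz ⟨?_, ?_⟩ rfl
  · exact le_of_mul_le_mul_left hlo hc
  · exact lt_of_mul_lt_mul_left (by linarith) hc.le

section Slices

variable {α β : Type*} [MeasurableSpace α] [MeasurableSpace β] {μ : Measure α} {ν : Measure β}
  [SFinite μ] [SFinite ν] {W : Set (α × β)}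

lemma mul_measure_le_setLIntegral_measure_inter_slice (hW : MeasurableSet W) {A : Set α}
    {J : Set β} (hJ : MeasurableSet J) {ε : ℝ≥0∞}
    (h : ∀ y ∈ J, ε ≤ μ (A ∩ {t | (t, y) ∈ W})) :
    ε * ν J ≤ ∫⁻ t in A, ν (J ∩ {y | (t, y) ∈ W}) ∂μ := by
  calc ε * ν J = ∫⁻ _ in J, ε ∂ν := (setLIntegral_const J ε).symm
    _ ≤ ∫⁻ y in J, μ.restrict A ((fun t => (t, y)) ⁻¹' W) ∂ν :=
        setLIntegral_mono' hJ fun y hy => by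
          rw [Measure.restrict_apply (measurable_prodMk_right hW), inter_comm]
          exact h y hy
    _ = (μ.restrict A).prod (ν.restrict J) W := (Measure.prod_apply_symm hW).symm
    _ = ∫⁻ t in A, ν (J ∩ {y | (t, y) ∈ W}) ∂μ := by
        rw [Measure.prod_apply hW]
        refine lintegral_congr fun t => ?_
        rw [Measure.restrict_apply (measurable_prodMk_left hW), inter_comm]
        rfl

lemma le_setIntegral_measure_inter_slice (hW : MeasurableSet W) {A : Set α} {I J : Set β}
    (hA : μ A ≠ ∞) (hI : ν I ≠ ∞) (hJ : MeasurableSet J) (hJI : J ⊆ I) {ε : ℝ} (hε : 0 ≤ ε)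
    (h : ∀ y ∈ J, ENNReal.ofReal ε ≤ μ (A ∩ {t | (t, y) ∈ W})) :
    ε * (ν J).toReal ≤ ∫ t in A, (ν (I ∩ {y | (t, y) ∈ W})).toReal ∂μ := by
  set F : α → ℝ≥0∞ := fun t => ν (I ∩ {y | (t, y) ∈ W})
  have hF_le (t : α) : F t ≤ ν I := measure_mono inter_subset_left
  have hF_meas : Measurable F := by
    have := measurable_measure_prodMk_left (ν := ν.restrict I) hW
    simp only [Measure.restrict_apply (measurable_prodMk_left hW), inter_comm] at this
    exact this
  have hF_lint : ∫⁻ t in A, F t ∂μ ≠ ∞ := by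
    refine ne_top_of_le_ne_top ?_ (lintegral_mono hF_le)
    rw [setLIntegral_const]
    exact ENNReal.mul_ne_top hI hA
  rw [integral_toReal hF_meas.aemeasurable (ae_of_all _ fun t => (hF_le t).trans_lt hI.lt_top),
    ← ENNReal.toReal_ofReal hε, ← ENNReal.toReal_mul]
  refine ENNReal.toReal_mono hF_lint <|
    (mul_measure_le_setLIntegral_measure_inter_slice hW hJ h).trans ?_
  exact lintegral_mono fun t => measure_mono (inter_subset_inter_left _ hJI)

end Slices

lemma image_mul_left_eq_setOf_div_mem {G₀ : Type*} [CommGroupWithZero G₀] {c : G₀} (hc : c ≠ 0)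
    (S : Set G₀) : (c * ·) '' S = {y | y / c ∈ S} :=
  congrFun (image_eq_preimage_of_inverse (fun y => mul_div_cancel_left₀ y hc)
    (fun y => mul_div_cancel₀ y hc)) S

lemma tendsto_div_sq_comp_sqrt {f : ℝ → ℝ} (hf : Tendsto (fun s => f s / s) atTop (𝓝 1)) :
    Tendsto (fun x => x / f √x ^ 2) atTop (𝓝 1) := by
  have := ((hf.comp Real.tendsto_sqrt_atTop).inv₀ one_ne_zero).pow 2
  rw [inv_one, one_pow] at this
  refine this.congr' ?_
  filter_upwards [eventually_gt_atTop 0] with x hx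
  simp only [Function.comp_apply, inv_div, div_pow, Real.sq_sqrt hx.le]

lemma tendsto_div_natCeil_sqrt_div_sq {C : ℝ} (hC : 0 < C) :
    Tendsto (fun y => y / (⌈√(y / C)⌉₊ : ℝ) ^ 2) atTop (𝓝 C) := by
  have := (tendsto_div_sq_comp_sqrt (f := fun s => (⌈s⌉₊ : ℝ)) tendsto_nat_ceil_div_atTop).comp
    (tendsto_id.atTop_div_const hC) |>.const_mul C
  rw [mul_one] at this
  refine this.congr fun y => ?_
  rw [Function.comp_apply, id, mul_div_assoc', mul_div_cancel₀ _ hC.ne']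

lemma div_mem_Ioo_of_mem_Ioo_div {y a b c : ℝ} (hy : 0 < y) (ha : 0 < a) (hb : 0 < b)
    (hc : c ∈ Ioo (y / b) (y / a)) : y / c ∈ Ioo a b := by
  obtain ⟨hbc, hca⟩ := hc
  have hc0 : 0 < c := (div_pos hy hb).trans hbc
  rw [div_lt_iff₀ hb] at hbc
  rw [lt_div_iff₀ ha] at hca
  exact ⟨by rw [lt_div_iff₀ hc0]; linarith, by rw [div_lt_iff₀ hc0]; linarith⟩

/-- The time `t` at which the dilation factor `√(1 + 2μt)` equals `v ≥ 0`. -/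
noncomputable def dilationTime (μ v : ℝ) : ℝ := (v ^ 2 - 1) / (2 * μ)

section DilationTime

variable {μ : ℝ}

lemma dilationTime_le_dilationTime (hμ : 0 < μ) {a b : ℝ} (ha : 0 ≤ a) (hab : a ≤ b) :
    dilationTime μ a ≤ dilationTime μ b := by
  unfold dilationTime
  gcongr

lemma sqrt_mem_Ioo_of_mem_Ioo_dilationTime (hμ : 0 < μ) {a b t : ℝ} (ha : 0 ≤ a) (hb : 0 ≤ b)
    (ht : t ∈ Ioo (dilationTime μ a) (dilationTime μ b)) : √(1 + 2 * μ * t) ∈ Ioo a b := by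
  obtain ⟨hat, htb⟩ := ht
  unfold dilationTime at hat htb
  rw [div_lt_iff₀ (by positivity)] at hat
  rw [lt_div_iff₀ (by positivity)] at htb
  constructor
  · calc a = √(a ^ 2) := (Real.sqrt_sq ha).symm
      _ < √(1 + 2 * μ * t) := Real.sqrt_lt_sqrt (sq_nonneg a) (by linarith)
  · calc √(1 + 2 * μ * t) < √(b ^ 2) := Real.sqrt_lt_sqrt (by nlinarith) (by linarith)
      _ = b := Real.sqrt_sq hb

end DilationTime

section Blocks

variable {μ T y : ℝ}

/-- The times `t` at which `y / √(1 + 2μt)` lies in the block `(n², n² + n)`. -/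
def blockTimes (μ y : ℝ) (n : ℕ) : Set ℝ :=
  Ioo (dilationTime μ (y / ((n : ℝ) ^ 2 + n))) (dilationTime μ (y / (n : ℝ) ^ 2))

lemma blockTimes_subset_setOf_div_sqrt_mem (hμ : 0 < μ) (hy : 0 < y) {n : ℕ} (hn : 1 ≤ n)
    (hny : (n : ℝ) ^ 2 + n ≤ y) (hnT : (y / (n : ℝ) ^ 2) ^ 2 ≤ 1 + 2 * μ * T) :
    blockTimes μ y n ⊆ {t ∈ Ioc 0 T | y / √(1 + 2 * μ * t) ∈ squareBlocks} := by
  have hn' : (0 : ℝ) < n := by exact_mod_cast hn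
  have h1 : 1 ≤ y / ((n : ℝ) ^ 2 + n) := (one_le_div (by positivity)).2 hny
  have h0 : 0 ≤ dilationTime μ (y / ((n : ℝ) ^ 2 + n)) :=
    div_nonneg (by nlinarith) (by positivity)
  have hT : dilationTime μ (y / (n : ℝ) ^ 2) ≤ T := by
    rw [dilationTime, div_le_iff₀ (by positivity)]
    linarith
  intro t ht
  refine ⟨⟨h0.trans_lt ht.1, ht.2.le.trans hT⟩, Ioo_subset_squareBlocks hn ?_⟩
  exact div_mem_Ioo_of_mem_Ioo_div hy (by positivity) (by positivity) <|
    sqrt_mem_Ioo_of_mem_Ioo_dilationTime hμ (by positivity) (by positivity) ht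

lemma disjoint_blockTimes_of_lt (hμ : 0 < μ) (hy : 0 < y) {m n : ℕ} (hm : 1 ≤ m)
    (hmn : m < n) : Disjoint (blockTimes μ y m) (blockTimes μ y n) := by
  have hm' : (1 : ℝ) ≤ m := by exact_mod_cast hm
  have hmn' : (m : ℝ) + 1 ≤ n := by exact_mod_cast hmn
  have hle : dilationTime μ (y / (n : ℝ) ^ 2) ≤ dilationTime μ (y / ((m : ℝ) ^ 2 + m)) :=
    dilationTime_le_dilationTime hμ (by positivity)
      (div_le_div_of_nonneg_left hy.le (by positivity) (by nlinarith))
  exact Set.disjoint_left.2 fun t htm htn => lt_irrefl t ((htn.2.trans_le hle).trans htm.1)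

/-- By AM-GM, `(y / (n² + n))² = (y / n²) (y / (n + 1)²)` lies below the mean of the squares, so
the lengths of the block times telescope. -/
lemma sub_div_le_volume_blockTimes (hμ : 0 < μ) {n : ℕ} (hn : 1 ≤ n) :
    ENNReal.ofReal (((y / (n : ℝ) ^ 2) ^ 2 - (y / ((n : ℝ) + 1) ^ 2) ^ 2) / (4 * μ)) ≤
      volume (blockTimes μ y n) := by
  have hn' : (0 : ℝ) < n := by exact_mod_cast hn
  set p := y / (n : ℝ) ^ 2
  set q := y / ((n : ℝ) + 1) ^ 2
  have hpq : (y / ((n : ℝ) ^ 2 + n)) ^ 2 = p * q := by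
    simp only [p, q]
    field_simp
  rw [blockTimes, Real.volume_Ioo, dilationTime, dilationTime, ← sub_div, hpq]
  refine ENNReal.ofReal_le_ofReal ?_
  rw [div_le_div_iff₀ (by positivity) (by positivity)]
  nlinarith [mul_nonneg (sq_nonneg (p - q)) hμ.le]

lemma ofReal_le_volume_setOf_div_sqrt_mem (hμ : 0 < μ) (hy : 0 < y) {N M : ℕ} (hN : 1 ≤ N)
    (hNM : N ≤ M) (hNT : (y / (N : ℝ) ^ 2) ^ 2 ≤ 1 + 2 * μ * T) (hMy : (M : ℝ) ^ 2 ≤ y) :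
    ENNReal.ofReal (((y / (N : ℝ) ^ 2) ^ 2 - (y / (M : ℝ) ^ 2) ^ 2) / (4 * μ)) ≤
      volume {t ∈ Ioc 0 T | y / √(1 + 2 * μ * t) ∈ squareBlocks} := by
  set g : ℕ → ℝ := fun n => (y / (n : ℝ) ^ 2) ^ 2 / (4 * μ)
  have hg_anti : ∀ n ∈ Finset.Ico N M, g (n + 1) ≤ g n := fun n hn => by
    have hn : (1 : ℝ) ≤ n := by exact_mod_cast hN.trans (Finset.mem_Ico.1 hn).1
    simp only [g]
    push_cast
    gcongr
    linarith
  have htel : ∑ n ∈ Finset.Ico N M, (g n - g (n + 1)) = g N - g M := by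
    rw [← neg_sub (g M), ← Finset.sum_Ico_sub g hNM, ← Finset.sum_neg_distrib]
    simp only [neg_sub]
  have hsub : ∀ n ∈ Finset.Ico N M, blockTimes μ y n ⊆
      {t ∈ Ioc 0 T | y / √(1 + 2 * μ * t) ∈ squareBlocks} := fun n hn => by
    obtain ⟨hNn, hnM⟩ := Finset.mem_Ico.1 hn
    have hNn' : (N : ℝ) ≤ n := by exact_mod_cast hNn
    have hnM' : (n : ℝ) + 1 ≤ M := by exact_mod_cast hnM
    have hN' : (1 : ℝ) ≤ N := by exact_mod_cast hN
    refine blockTimes_subset_setOf_div_sqrt_mem hμ hy (hN.trans hNn) (by nlinarith)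
      (hNT.trans' ?_)
    gcongr
  have hdisj : (Finset.Ico N M : Set ℕ).PairwiseDisjoint (blockTimes μ y) := by
    intro m hm n hn hmn
    rcases hmn.lt_or_gt with h | h
    · exact disjoint_blockTimes_of_lt hμ hy (hN.trans (Finset.mem_Ico.1 hm).1) h
    · exact (disjoint_blockTimes_of_lt hμ hy (hN.trans (Finset.mem_Ico.1 hn).1) h).symm
  calc ENNReal.ofReal (((y / (N : ℝ) ^ 2) ^ 2 - (y / (M : ℝ) ^ 2) ^ 2) / (4 * μ))
      = ENNReal.ofReal (∑ n ∈ Finset.Ico N M, (g n - g (n + 1))) := by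
        rw [htel, sub_div]
    _ = ∑ n ∈ Finset.Ico N M, ENNReal.ofReal (g n - g (n + 1)) :=
        ENNReal.ofReal_sum_of_nonneg fun n hn => sub_nonneg.2 (hg_anti n hn)
    _ ≤ ∑ n ∈ Finset.Ico N M, volume (blockTimes μ y n) := Finset.sum_le_sum fun n hn => by
        simpa only [g, sub_div, Nat.cast_succ] using
          sub_div_le_volume_blockTimes (y := y) hμ (hN.trans (Finset.mem_Ico.1 hn).1)
    _ = volume (⋃ n ∈ Finset.Ico N M, blockTimes μ y n) :=
        (measure_biUnion_finset hdisj fun _ _ => measurableSet_Ioo).symm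
    _ ≤ _ := measure_mono (iUnion₂_subset hsub)

/-- With `C = √(1 + 2μT)`, `N = ⌈√(y / C)⌉` and `M = ⌊√y⌋`, the lower bound
`((y / N²)² - (y / M²)²) / (4μ)` tends to `(C² - 1) / (4μ) = T / 2`. -/
lemma eventually_ofReal_le_volume_setOf_div_sqrt_mem (hμ : 0 < μ) (hT : 0 < T) :
    ∀ᶠ y in atTop, ENNReal.ofReal (T / 4) ≤
      volume {t ∈ Ioc 0 T | y / √(1 + 2 * μ * t) ∈ squareBlocks} := by
  set C := √(1 + 2 * μ * T)
  have hC2 : C ^ 2 = 1 + 2 * μ * T := Real.sq_sqrt (by positivity)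
  have hC0 : 0 < C := Real.sqrt_pos.2 (by positivity)
  have hNlim := tendsto_div_natCeil_sqrt_div_sq hC0
  have hMlim : Tendsto (fun y => y / (⌊√y⌋₊ : ℝ) ^ 2) atTop (𝓝 1) :=
    tendsto_div_sq_comp_sqrt (f := fun s => (⌊s⌋₊ : ℝ)) tendsto_nat_floor_div_atTop
  have hlim : Tendsto (fun y => ((y / (⌈√(y / C)⌉₊ : ℝ) ^ 2) ^ 2 - (y / (⌊√y⌋₊ : ℝ) ^ 2) ^ 2)
      / (4 * μ)) atTop (𝓝 (T / 2)) := by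
    have hT2 : (C ^ 2 - 1 ^ 2) / (4 * μ) = T / 2 := by
      rw [hC2]
      field_simp
      ring
    simpa only [hT2] using ((hNlim.pow 2).sub (hMlim.pow 2)).div_const (4 * μ)
  filter_upwards [hlim.eventually (lt_mem_nhds (by linarith : T / 4 < T / 2)),
    eventually_ge_atTop 1] with y hlt hy
  set N := ⌈√(y / C)⌉₊
  set M := ⌊√y⌋₊
  have hN : 1 ≤ N := Nat.ceil_pos.2 (Real.sqrt_pos.2 (by positivity))
  have hM : 1 ≤ M := Nat.le_floor (by simpa using Real.one_le_sqrt.2 hy)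
  have hNT : (y / (N : ℝ) ^ 2) ^ 2 ≤ 1 + 2 * μ * T := by
    have hyN : y / C ≤ (N : ℝ) ^ 2 := by
      simpa [Real.sq_sqrt (by positivity : 0 ≤ y / C)] using pow_le_pow_left₀ (by positivity)
        (Nat.le_ceil (√(y / C))) 2
    rw [← hC2]
    gcongr
    rw [div_le_iff₀ (by positivity)]
    rwa [div_le_iff₀ hC0, mul_comm] at hyN
  have hMy : (M : ℝ) ^ 2 ≤ y := by
    simpa [Real.sq_sqrt (by positivity : 0 ≤ y)] using pow_le_pow_left₀ (by positivity)
      (Nat.floor_le (Real.sqrt_nonneg y)) 2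
  have hNM : N ≤ M := by
    by_contra! hMN
    have hM' : (1 : ℝ) ≤ M := by exact_mod_cast hM
    have hMN' : (M : ℝ) ≤ N := by exact_mod_cast hMN.le
    have : (y / (N : ℝ) ^ 2) ^ 2 ≤ (y / (M : ℝ) ^ 2) ^ 2 := by gcongr
    have : ((y / (N : ℝ) ^ 2) ^ 2 - (y / (M : ℝ) ^ 2) ^ 2) / (4 * μ) ≤ 0 :=
      div_nonpos_of_nonpos_of_nonneg (by linarith) (by positivity)
    linarith
  exact (ENNReal.ofReal_le_ofReal hlt.le).trans
    (ofReal_le_volume_setOf_div_sqrt_mem hμ (by positivity) hN hNM hNT hMy)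

lemma exists_forall_le_abs_ofReal_le_volume_setOf_div_sqrt_mem (hμ : 0 < μ) (hT : 0 < T) :
    ∃ Y, 0 ≤ Y ∧ ∀ y, Y ≤ |y| → ENNReal.ofReal (T / 4) ≤
      volume {t ∈ Ioc 0 T | y / √(1 + 2 * μ * t) ∈ squareBlocks} := by
  obtain ⟨Y, hY⟩ := eventually_atTop.1
    ((eventually_ofReal_le_volume_setOf_div_sqrt_mem hμ hT).and (eventually_ge_atTop 0))
  refine ⟨Y, (hY Y le_rfl).2, fun y hy => ?_⟩
  rcases le_abs'.1 hy with h | h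
  · simpa only [neg_div, neg_neg, neg_mem_squareBlocks_iff] using (hY (-y) (by linarith)).1
  · exact (hY y h).1

end Blocks

lemma exists_Ioo_subset_Ioo_forall_le_abs (x : ℝ) {Y : ℝ} (hY : 0 ≤ Y) :
    ∃ a, Ioo a (a + 1) ⊆ Ioo (x - (Y + 1)) (x + (Y + 1)) ∧ ∀ y ∈ Ioo a (a + 1), Y ≤ |y| := by
  rcases le_total 0 x with hx | hx
  · exact ⟨x + Y, Ioo_subset_Ioo (by linarith) (by linarith),
      fun y hy => le_abs.2 (Or.inl (by linarith [hy.1]))⟩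
  · exact ⟨x - Y - 1, Ioo_subset_Ioo (by linarith) (by linarith),
      fun y hy => le_abs.2 (Or.inr (by linarith [hy.2]))⟩

/-- Proposition 2.5: the moving supports `ω(t) = √(1+2μt)·ω` satisfy the integral
thickness condition on `[0,T]` although no `ω(t)` is thick in `ℝ`. -/
theorem dilation_integral_thickness (μ T : ℝ) (hμ : 0 < μ) (hT : 0 < T)
    (ω : Set ℝ)
    (hω : ω = Set.Icc (-1 : ℝ) 1 ∪
      ⋃ n : ℕ, ⋃ (_ : 1 ≤ n),
        (Set.Ioo ((n : ℝ) ^ 2) ((n : ℝ) ^ 2 + n) ∪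
          Set.Ioo (-(n : ℝ) ^ 2 - n) (-(n : ℝ) ^ 2)))
    (ωt : ℝ → Set ℝ)
    (hωt : ∀ t : ℝ, ωt t = (fun y => Real.sqrt (1 + 2 * μ * t) * y) '' ω) :
    (∃ r δ : ℝ, 0 < r ∧ 0 < δ ∧
      ∀ x : ℝ, δ ≤
        ∫ t in Set.Ioc (0 : ℝ) T, (volume (Set.Ioo (x - r) (x + r) ∩ ωt t)).toReal) ∧
    ∀ t ∈ Set.Icc (0 : ℝ) T, ¬ IsThick1 (ωt t) := by
  obtain rfl : ω = squareBlocks := hω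
  refine ⟨?_, fun t ht => hωt t ▸ not_isThick1_image_mul_squareBlocks
    (Real.sqrt_pos.2 (by nlinarith [ht.1]))⟩
  obtain ⟨Y, hY0, hY⟩ := exists_forall_le_abs_ofReal_le_volume_setOf_div_sqrt_mem hμ hT
  set W : Set (ℝ × ℝ) := {p | p.2 / √(1 + 2 * μ * p.1) ∈ squareBlocks}
  have hW : MeasurableSet W := measurableSet_squareBlocks.preimage (by fun_prop)
  refine ⟨Y + 1, T / 4, by linarith, by linarith, fun x => ?_⟩
  obtain ⟨a, haI, haY⟩ := exists_Ioo_subset_Ioo_forall_le_abs x hY0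
  have hslice : ∀ t ∈ Ioc 0 T, ωt t = {y | (t, y) ∈ W} := fun t ht => by
    rw [hωt, image_mul_left_eq_setOf_div_mem (Real.sqrt_pos.2 (by nlinarith [ht.1])).ne']
    rfl
  rw [setIntegral_congr_fun measurableSet_Ioc fun t ht => by rw [hslice t ht]]
  simpa using le_setIntegral_measure_inter_slice (μ := volume) (ν := volume) hW
    measure_Ioc_lt_top.ne measure_Ioo_lt_top.ne measurableSet_Ioo haI (by linarith)
    fun y hy => hY y (haY y hy)
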